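/- arXiv:1805.04544 — 4 statements merged into one kernel-verified Lean document; each statement's English description precedes it below -/
import Mathlib

section
/- Let G be a weighted finite graph with a unique maximum weight spanning forest F, and let U be a set of vertices that induces a subtree T of F. Then the induced subgraph G[U] has a unique maximum weight spanning tree, and it equals T. -/
/-!
Replace the tree `F[U]` inside `F` by any acyclic `B ≤ G[U]`. The result is again a forest: as `F`
is acyclic and `F[U]` connected, no path of `F` avoiding the edges inside `U` joins two distinct
vertices of `U`, so a walk of the new graph between vertices of `U` can be pushed into `B`, while a
walk avoiding an edge of `F` not inside `U` can be pushed into `F` through `F[U]`; hence every edge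
is a bridge. The weight changes by `w(B) - w(F[U])`, so maximality and uniqueness of `F` pass to
`F[U]`.
-/

/-- Total weight of (the edges of) a graph. -/
noncomputable def wt {V : Type*} (w : Sym2 V → ℝ) (F : SimpleGraph V) : ℝ :=
  ∑ᶠ e ∈ F.edgeSet, w e

/-- Total weight of a graph on a subtype, weights taken from the ambient weight function. -/
noncomputable def wtS {V : Type*} {s : Set V} (w : Sym2 V → ℝ) (F : SimpleGraph s) : ℝ :=
  ∑ᶠ e ∈ F.edgeSet, w (Sym2.map Subtype.val e)

namespace SimpleGraph

variable {V : Type*} {F G H K : SimpleGraph V} {U : Set V} {B : SimpleGraph U}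

lemma Reachable.of_forall_adj_reachable (h : ∀ ⦃a b⦄, H.Adj a b → K.Reachable a b) {x y : V}
    (hxy : H.Reachable x y) : K.Reachable x y := by
  rw [reachable_eq_reflTransGen] at h hxy ⊢
  exact hxy.lift' id h

def replaceInduce (F : SimpleGraph V) (U : Set V) (B : SimpleGraph U) : SimpleGraph V :=
  F.deleteEdges U.sym2 ⊔ B.map (Function.Embedding.subtype _)

lemma replaceInduce_adj {a b : V} : (F.replaceInduce U B).Adj a b ↔
    F.Adj a b ∧ ¬(a ∈ U ∧ b ∈ U) ∨ ∃ (ha : a ∈ U) (hb : b ∈ U), B.Adj ⟨a, ha⟩ ⟨b, hb⟩ := by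
  simp only [replaceInduce, sup_adj, deleteEdges_adj, Set.mk_mem_sym2_iff, map_adj,
    Function.Embedding.subtype_apply]
  constructor
  · rintro (h | ⟨⟨a, ha⟩, ⟨b, hb⟩, h, rfl, rfl⟩)
    · exact .inl h
    · exact .inr ⟨ha, hb, h⟩
  · rintro (h | ⟨ha, hb, h⟩)
    · exact .inl h
    · exact .inr ⟨_, _, h, rfl, rfl⟩

lemma replaceInduce_induce : F.replaceInduce U (F.induce U) = F := by
  ext a b
  simp only [replaceInduce_adj, comap_adj, Function.Embedding.subtype_apply]
  tauto

lemma induce_replaceInduce : (F.replaceInduce U B).induce U = B := by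
  ext ⟨a, ha⟩ ⟨b, hb⟩
  simp [replaceInduce_adj, ha, hb]

lemma replaceInduce_le (hF : F ≤ G) (hB : B ≤ G.induce U) : F.replaceInduce U B ≤ G := by
  intro a b hab
  rcases replaceInduce_adj.mp hab with ⟨h, -⟩ | ⟨ha, hb, h⟩
  · exact hF h
  · simpa using hB h

lemma replaceInduce_mono {F₁ F₂ : SimpleGraph V} {B₁ B₂ : SimpleGraph U} (hF : F₁ ≤ F₂)
    (hB : B₁ ≤ B₂) : F₁.replaceInduce U B₁ ≤ F₂.replaceInduce U B₂ :=
  sup_le_sup (deleteEdges_mono hF) (map_monotone _ hB)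

lemma deleteEdges_replaceInduce (s : Set (Sym2 V)) :
    (F.replaceInduce U B).deleteEdges s =
      (F.deleteEdges s).replaceInduce U (B.deleteEdges (Sym2.map (↑) ⁻¹' s)) := by
  ext a b
  simp only [deleteEdges_adj, replaceInduce_adj, Set.mem_preimage, Sym2.map_mk]
  tauto

lemma eq_of_reachable_deleteEdges_sym2 (hF : F.IsAcyclic) (hU : (F.induce U).Preconnected)
    {x y : V} (hx : x ∈ U) (hy : y ∈ U) (h : (F.deleteEdges U.sym2).Reachable x y) : x = y := by
  obtain ⟨p, hp⟩ := h.exists_isPath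
  obtain ⟨q, hq⟩ := (hU ⟨x, hx⟩ ⟨y, hy⟩).exists_isPath
  have hpq : p.mapLe (deleteEdges_le _) = q.map (Embedding.induce U).toHom :=
    congrArg Subtype.val <|
      (hF.subsingleton_path x y).elim ⟨_, hp.mapLe _⟩ ⟨_, hq.map Subtype.val_injective⟩
  have hq_in : ∀ e ∈ (q.map (Embedding.induce U).toHom).edges, e ∈ U.sym2 := by
    simp only [Walk.edges_map, List.mem_map]
    rintro _ ⟨e, -, rfl⟩
    induction e using Sym2.ind with
    | _ u v => exact ⟨u.2, v.2⟩
  by_contra hxy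
  obtain ⟨e, he⟩ := List.exists_mem_of_ne_nil _ (mt Walk.edges_eq_nil.mp (Walk.not_nil_of_ne hxy))
  have he_out : e ∉ U.sym2 := by
    have := p.edges_subset_edgeSet he
    rw [edgeSet_deleteEdges] at this
    exact this.2
  rw [← Walk.edges_mapLe_eq_edges (deleteEdges_le _), hpq] at he
  exact he_out (hq_in e he)

lemma Reachable.of_replaceInduce (hU : (F.induce U).Preconnected) {x y : V}
    (h : (F.replaceInduce U B).Reachable x y) : F.Reachable x y := by
  refine h.of_forall_adj_reachable fun a b hab => ?_
  rcases replaceInduce_adj.mp hab with ⟨hF, -⟩ | ⟨ha, hb, -⟩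
  · exact hF.reachable
  · exact (hU ⟨a, ha⟩ ⟨b, hb⟩).map (Embedding.induce U).toHom

lemma Reachable.subtype_of_replaceInduce (hF : F.IsAcyclic) (hU : (F.induce U).Preconnected)
    {x y : V} (hx : x ∈ U) (hy : y ∈ U) (h : (F.replaceInduce U B).Reachable x y) :
    B.Reachable ⟨x, hx⟩ ⟨y, hy⟩ := by
  -- An excursion along edges of `F` not inside `U` returns to the vertex of `U` it started from.
  have key : ∀ z, (F.replaceInduce U B).Reachable z y →
      ∃ u : U, (F.deleteEdges U.sym2).Reachable z u ∧ B.Reachable u ⟨y, hy⟩ := by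
    intro z hz
    rw [reachable_iff_reflTransGen] at hz
    induction hz using Relation.ReflTransGen.head_induction_on with
    | refl => exact ⟨⟨y, hy⟩, .rfl, .rfl⟩
    | head hzc _ ih =>
      obtain ⟨u, hcu, huy⟩ := ih
      rcases replaceInduce_adj.mp hzc with hout | ⟨hz, hc, hB⟩
      · exact ⟨u, (deleteEdges_adj.mpr hout).reachable.trans hcu, huy⟩
      · obtain rfl := eq_of_reachable_deleteEdges_sym2 hF hU hc u.2 hcu
        exact ⟨⟨_, hz⟩, .rfl, hB.reachable.trans huy⟩
  obtain ⟨u, hxu, huy⟩ := key x h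
  obtain rfl := eq_of_reachable_deleteEdges_sym2 hF hU hx u.2 hxu
  exact huy

lemma IsAcyclic.replaceInduce (hF : F.IsAcyclic) (hU : (F.induce U).Preconnected)
    (hB : B.IsAcyclic) : (F.replaceInduce U B).IsAcyclic := by
  rw [isAcyclic_iff_forall_adj_isBridge]
  intro a b hab
  rw [isBridge_iff, deleteEdges_replaceInduce]
  intro hreach
  rcases replaceInduce_adj.mp hab with ⟨hF', hout⟩ | ⟨ha, hb, hB'⟩
  · have hU' : ((F.deleteEdges {s(a, b)}).induce U).Preconnected := by
      refine hU.mono fun x y hxy => deleteEdges_adj.mpr ⟨hxy, fun h => hout ?_⟩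
      rw [← Set.mk_mem_sym2_iff, ← Set.mem_singleton_iff.mp h]
      exact ⟨x.2, y.2⟩
    exact isAcyclic_iff_forall_adj_isBridge.mp hF hF' (hreach.of_replaceInduce hU')
  · have hpre : Sym2.map (↑) ⁻¹' {s(a, b)} = ({s(⟨a, ha⟩, ⟨b, hb⟩)} : Set (Sym2 U)) := by
      rw [← (Sym2.map.injective Subtype.val_injective).preimage_image {s(⟨a, ha⟩, ⟨b, hb⟩)},
        Set.image_singleton, Sym2.map_mk]
    have := (hreach.mono (replaceInduce_mono (deleteEdges_le _) le_rfl)).subtype_of_replaceInduce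
      hF hU ha hb
    rw [hpre] at this
    exact isAcyclic_iff_forall_adj_isBridge.mp hB hB' this

lemma wt_replaceInduce [Finite V] (w : Sym2 V → ℝ) :
    wt w (F.replaceInduce U B) = wt w (F.deleteEdges U.sym2) + wtS w B := by
  have hdisj : Disjoint (F.deleteEdges U.sym2).edgeSet (Sym2.map (↑) '' B.edgeSet) := by
    rw [Set.disjoint_left, edgeSet_deleteEdges]
    rintro _ ⟨-, hout⟩ ⟨e, -, rfl⟩
    induction e using Sym2.ind with
    | _ u v => exact hout ⟨u.2, v.2⟩
  rw [wt, wt, wtS, replaceInduce, edgeSet_sup,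
    show (B.map (Function.Embedding.subtype _)).edgeSet = Sym2.map (↑) '' B.edgeSet from
      edgeSet_map _ _,
    finsum_mem_union hdisj (Set.toFinite _) (Set.toFinite _),
    finsum_mem_image (Sym2.map.injective Subtype.val_injective).injOn]

end SimpleGraph

open SimpleGraph in
/-- Let `G` be a weighted finite graph with a unique maximum weight spanning
forest `F`, and let `U` be a set of vertices inducing a subtree `T = F[U]` of `F`.  Then
`G[U]` has a unique maximum weight spanning tree, which equals `T`. -/
theorem stmt_4 {V : Type*} [Fintype V] (G : SimpleGraph V) (w : Sym2 V → ℝ)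
    (F : SimpleGraph V) (hFG : F ≤ G) (hFac : F.IsAcyclic)
    (hmax : ∀ F' : SimpleGraph V, F' ≤ G → F'.IsAcyclic → wt w F' ≤ wt w F)
    (huniq : ∀ F' : SimpleGraph V, F' ≤ G → F'.IsAcyclic → wt w F' = wt w F → F' = F)
    (U : Set V) (hU : (F.induce U).Connected) :
    F.induce U ≤ G.induce U ∧ (F.induce U).IsAcyclic ∧ (F.induce U).Connected ∧
    (∀ F' : SimpleGraph U, F' ≤ G.induce U → F'.IsAcyclic → F'.Connected →
      wtS w F' ≤ wtS w (F.induce U)) ∧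
    (∀ F' : SimpleGraph U, F' ≤ G.induce U → F'.IsAcyclic → F'.Connected →
      wtS w F' = wtS w (F.induce U) → F' = F.induce U) := by
  have hwtF : wt w F = wt w (F.deleteEdges U.sym2) + wtS w (F.induce U) := by
    conv_lhs => rw [← replaceInduce_induce (F := F) (U := U)]
    exact wt_replaceInduce w
  refine ⟨comap_monotone _ hFG, hFac.induce U, hU, fun B hBG hB _ => ?_,
    fun B hBG hB _ heq => ?_⟩
  · have := hmax _ (replaceInduce_le hFG hBG) (hFac.replaceInduce hU.preconnected hB)
    linarith [wt_replaceInduce (F := F) (B := B) w]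
  · have hF : F.replaceInduce U B = F :=
      huniq _ (replaceInduce_le hFG hBG) (hFac.replaceInduce hU.preconnected hB)
        (by linarith [wt_replaceInduce (F := F) (B := B) w])
    calc B = (F.replaceInduce U B).induce U := induce_replaceInduce.symm
      _ = F.induce U := by rw [hF]
end

section
/- Let T be a clique forest of a chordal graph G, let P = C_1,...,C_k be a path in T, and let V_P = C_1 ∪ ... ∪ C_k. Then P is a clique forest of the induced subgraph G[V_P], and consequently G[V_P] is an interval graph. -/
/-- A maximal clique: a clique not properly contained in any other clique. -/
def IsMaximalClique {V : Type*} (G : SimpleGraph V) (s : Set V) : Prop :=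
  G.IsClique s ∧ ∀ t : Set V, G.IsClique t → s ⊆ t → s = t

/-- An interval graph: a graph admitting a representation of its vertices by nonempty closed
real intervals such that two distinct vertices are adjacent iff their intervals intersect. -/
def IsIntervalGraph {V : Type*} (G : SimpleGraph V) : Prop :=
  ∃ I : V → Set ℝ, (∀ v, ∃ a b : ℝ, a ≤ b ∧ I v = Set.Icc a b) ∧
    ∀ u v : V, u ≠ v → (G.Adj u v ↔ (I u ∩ I v).Nonempty)

/-- A tree decomposition of a graph `G`. -/
structure TreeDecomp (V ι : Type*) (G : SimpleGraph V) where
  T : SimpleGraph ι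
  acyclic : T.IsAcyclic
  bag : ι → Set V
  covers_vertex : ∀ v : V, ∃ i, v ∈ bag i
  covers_edge : ∀ ⦃u v : V⦄, G.Adj u v → ∃ i, u ∈ bag i ∧ v ∈ bag i
  subtree : ∀ v : V, (T.induce {i | v ∈ bag i}).Connected

/-- A clique forest of `G`: a tree decomposition whose bags are exactly the maximal
cliques of `G`, without repetition. -/
structure CliqueForest (V ι : Type*) (G : SimpleGraph V) extends TreeDecomp V ι G where
  bag_maxClique : ∀ i, IsMaximalClique G (bag i)
  maxClique_mem : ∀ C : Set V, IsMaximalClique G C → ∃ i, bag i = C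
  bag_injective : Function.Injective bag

/-!
In a forest, a connected vertex set contains the unique path between any two of its vertices.
Applied to the subtree of bags containing a vertex `v` and to the path `P`, this makes the
positions `j` with `v ∈ C_j` an interval. For an edge `uv`, the three tree paths joining a bag of
`P` containing `u`, a bag of `P` containing `v` and a bag containing both meet in a common vertex;
it lies on `P` and its bag contains `u` and `v`. Hence `G[V_P]` is the intersection graph of these
intervals of positions, and by the Helly property of intervals every clique of `G[V_P]` lies in
some `C_j`, so the `C_j` are exactly its maximal cliques.
-/

open SimpleGraph

namespace SimpleGraph

variable {ι : Type*} {T : SimpleGraph ι}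

theorem IsAcyclic.support_subset_of_isPath (hT : T.IsAcyclic) {i j : ι} {p : T.Walk i j}
    (hp : p.IsPath) (w : T.Walk i j) : p.support ⊆ w.support := by
  classical
  have hpw : p = w.bypass :=
    congrArg Subtype.val ((hT.subsingleton_path i j).elim ⟨p, hp⟩ ⟨_, w.bypass_isPath⟩)
  exact hpw ▸ w.support_bypass_subset_support

theorem IsAcyclic.mem_of_mem_support (hT : T.IsAcyclic) {s : Set ι}
    (hs : (T.induce s).Preconnected) {i j : ι} (hi : i ∈ s) (hj : j ∈ s) {p : T.Walk i j}
    (hp : p.IsPath) {x : ι} (hx : x ∈ p.support) : x ∈ s := by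
  obtain ⟨w⟩ := hs ⟨i, hi⟩ ⟨j, hj⟩
  have hx' : x ∈ (w.map (Embedding.induce s).toHom).support :=
    hT.support_subset_of_isPath hp _ hx
  simp only [Walk.support_map, List.mem_map] at hx'
  obtain ⟨y, -, rfl⟩ := hx'
  exact y.2

theorem IsAcyclic.exists_mem_support_of_isPath (hT : T.IsAcyclic) {a b i : ι} {r : T.Walk a b}
    {p : T.Walk a i} {q : T.Walk b i} (hr : r.IsPath) (hp : p.IsPath) (hq : q.IsPath) :
    ∃ x ∈ r.support, x ∈ p.support ∧ x ∈ q.support := by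
  induction p with
  | nil => exact ⟨_, r.start_mem_support, Walk.start_mem_support _, q.end_mem_support⟩
  | @cons a a' i h p ih =>
    classical
    rw [Walk.cons_isPath_iff] at hp
    by_cases ha' : a' ∈ r.support
    · obtain ⟨x, hx, hxp, hxq⟩ := ih (hr.dropUntil ha') hp.1 hq
      exact ⟨x, r.support_dropUntil_subset_support ha' hx, List.mem_cons_of_mem _ hxp, hxq⟩
    obtain ⟨x, hx, hxp, hxq⟩ := ih (r := Walk.cons h.symm r) (hr.cons ha') hp.1 hq
    rcases List.mem_cons.mp hx with rfl | hx
    · -- the path from `x = a'` to `b` runs through `a`, and it is an initial piece of `q`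
      refine ⟨a, r.start_mem_support, Walk.start_mem_support _, ?_⟩
      have hqx : (q.takeUntil x hxq).reverse = Walk.cons h.symm r :=
        congrArg Subtype.val <| (hT.subsingleton_path _ _).elim
          ⟨_, (hq.takeUntil hxq).reverse⟩ ⟨_, hr.cons ha'⟩
      have ha : a ∈ (q.takeUntil x hxq).reverse.support := by simp [hqx]
      rw [Walk.support_reverse, List.mem_reverse] at ha
      exact q.support_takeUntil_subset_support hxq ha
    · exact ⟨x, hx, List.mem_cons_of_mem _ hxp, hxq⟩

theorem exists_isPath_of_chain {k : ℕ} {c : Fin k → ι} (hinj : Function.Injective c)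
    (hchain : ∀ j : Fin k, ∀ hj : (j : ℕ) + 1 < k, T.Adj (c j) (c ⟨(j : ℕ) + 1, hj⟩))
    {a b : Fin k} (hab : a ≤ b) :
    ∃ p : T.Walk (c a) (c b), p.IsPath ∧ ∀ x, x ∈ p.support ↔ x ∈ c '' Set.Icc a b := by
  obtain ⟨b, hb⟩ := b
  change (a : ℕ) ≤ b at hab
  induction b, hab using Nat.le_induction with
  | base =>
    refine ⟨Walk.nil, Walk.IsPath.nil, fun x => ?_⟩
    simp only [Walk.support_nil, List.mem_singleton]
    constructor
    · rintro rfl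
      exact ⟨a, ⟨le_rfl, le_rfl⟩, rfl⟩
    · rintro ⟨m, ⟨ham, hma⟩, rfl⟩
      rw [le_antisymm hma ham]
  | succ b hab ih =>
    obtain ⟨p, hp, hsupp⟩ := ih (by omega)
    have hnew : c ⟨b + 1, hb⟩ ∉ p.support := by
      rw [hsupp]
      rintro ⟨m, ⟨-, hmb⟩, hm⟩
      have := Fin.ext_iff.mp (hinj hm)
      simp only [Fin.le_def] at hmb this
      omega
    refine ⟨p.concat (hchain ⟨b, by omega⟩ hb), hp.concat hnew _, fun x => ?_⟩
    rw [Walk.support_concat, List.mem_append, hsupp, List.mem_singleton]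
    constructor
    · rintro (⟨m, ⟨ham, hmb⟩, rfl⟩ | rfl)
      · exact ⟨m, ⟨ham, by simp only [Fin.le_def] at hmb ⊢; omega⟩, rfl⟩
      · exact ⟨_, ⟨by simp only [Fin.le_def] at hab ⊢; omega, le_rfl⟩, rfl⟩
    · rintro ⟨m, ⟨ham, hmb⟩, rfl⟩
      by_cases hm : (m : ℕ) = b + 1
      · exact Or.inr (congrArg c (Fin.ext hm))
      · exact Or.inl ⟨m, ⟨ham, by simp only [Fin.le_def] at hmb ⊢; omega⟩, rfl⟩

end SimpleGraph

namespace TreeDecomp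

variable {V ι : Type*} {G : SimpleGraph V} (D : TreeDecomp V ι G)

theorem mem_bag_of_isPath {v : V} {i j : ι} {p : D.T.Walk i j} (hp : p.IsPath)
    (hi : v ∈ D.bag i) (hj : v ∈ D.bag j) {x : ι} (hx : x ∈ p.support) : v ∈ D.bag x :=
  D.acyclic.mem_of_mem_support (s := {i | v ∈ D.bag i}) (D.subtree v).preconnected hi hj hp hx

theorem exists_isPath_of_mem_bag {v : V} {i j : ι} (hi : v ∈ D.bag i) (hj : v ∈ D.bag j) :
    ∃ p : D.T.Walk i j, p.IsPath :=
  (((D.subtree v).preconnected ⟨i, hi⟩ ⟨j, hj⟩).map (Embedding.induce _).toHom).exists_isPath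

variable {k : ℕ} {c : Fin k → ι} (hinj : Function.Injective c)
    (hchain : ∀ j : Fin k, ∀ hj : (j : ℕ) + 1 < k, D.T.Adj (c j) (c ⟨(j : ℕ) + 1, hj⟩))
include hinj hchain

theorem mem_bag_chain_of_le_of_le {v : V} {a b m : Fin k} (ham : a ≤ m) (hmb : m ≤ b)
    (ha : v ∈ D.bag (c a)) (hb : v ∈ D.bag (c b)) : v ∈ D.bag (c m) := by
  obtain ⟨p, hp, hsupp⟩ := exists_isPath_of_chain hinj hchain (ham.trans hmb)
  exact D.mem_bag_of_isPath hp ha hb ((hsupp _).2 ⟨m, ⟨ham, hmb⟩, rfl⟩)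

theorem exists_mem_bag_chain_of_adj {u v : V} (huv : G.Adj u v) {j₁ j₂ : Fin k}
    (hu : u ∈ D.bag (c j₁)) (hv : v ∈ D.bag (c j₂)) :
    ∃ j, u ∈ D.bag (c j) ∧ v ∈ D.bag (c j) := by
  wlog h : j₁ ≤ j₂ generalizing u v j₁ j₂
  · obtain ⟨j, hv, hu⟩ := this huv.symm hv hu (le_of_not_ge h)
    exact ⟨j, hu, hv⟩
  obtain ⟨i, hui, hvi⟩ := D.covers_edge huv
  obtain ⟨r, hr, hsupp⟩ := exists_isPath_of_chain hinj hchain h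
  obtain ⟨p, hp⟩ := D.exists_isPath_of_mem_bag hu hui
  obtain ⟨q, hq⟩ := D.exists_isPath_of_mem_bag hv hvi
  obtain ⟨x, hxr, hxp, hxq⟩ := D.acyclic.exists_mem_support_of_isPath hr hp hq
  obtain ⟨m, -, rfl⟩ := (hsupp x).1 hxr
  exact ⟨m, D.mem_bag_of_isPath hp hu hui hxp, D.mem_bag_of_isPath hq hv hvi hxq⟩

end TreeDecomp

section IntervalFamily

variable {α β : Type*} [LinearOrder β] [Finite β] {A : α → Set β}

theorem exists_forall_mem_of_pairwise_inter_nonempty [Nonempty β]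
    (hconv : ∀ u, (A u).OrdConnected) (hne : ∀ u, (A u).Nonempty) {S : Set α}
    (hS : S.Pairwise fun u v => (A u ∩ A v).Nonempty) : ∃ j, ∀ u ∈ S, j ∈ A u := by
  choose lo hlo hlo_le using fun u => Set.exists_min_image (A u) id (A u).toFinite (hne u)
  rcases S.eq_empty_or_nonempty with rfl | hS_ne
  · exact ⟨Classical.arbitrary β, by simp⟩
  -- the largest left endpoint lies in every interval
  obtain ⟨_, ⟨u₀, hu₀, rfl⟩, hmax⟩ :=
    Set.exists_max_image (lo '' S) id (Set.toFinite _) (hS_ne.image lo)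
  refine ⟨lo u₀, fun u hu => ?_⟩
  rcases eq_or_ne u u₀ with rfl | hu₀u
  · exact hlo u
  obtain ⟨j, hju, hju₀⟩ := hS hu hu₀ hu₀u
  exact (hconv u).out (hlo u) hju ⟨hmax _ ⟨u, hu, rfl⟩, hlo_le u₀ j hju₀⟩

theorem isIntervalGraph_of_adj_iff {H : SimpleGraph α} (f : β ↪o ℝ)
    (hconv : ∀ u, (A u).OrdConnected) (hne : ∀ u, (A u).Nonempty)
    (hadj : ∀ u v, u ≠ v → (H.Adj u v ↔ (A u ∩ A v).Nonempty)) : IsIntervalGraph H := by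
  choose lo hlo hlo_le using fun u => Set.exists_min_image (A u) id (A u).toFinite (hne u)
  choose hi hhi hhi_le using fun u => Set.exists_max_image (A u) id (A u).toFinite (hne u)
  refine ⟨fun u => Set.Icc (f (lo u)) (f (hi u)),
    fun u => ⟨_, _, f.monotone (hlo_le u _ (hhi u)), rfl⟩, fun u v huv => (hadj u v huv).trans ?_⟩
  constructor
  · rintro ⟨j, hju, hjv⟩
    exact ⟨f j, ⟨f.monotone (hlo_le u j hju), f.monotone (hhi_le u j hju)⟩,
      ⟨f.monotone (hlo_le v j hjv), f.monotone (hhi_le v j hjv)⟩⟩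
  · rintro ⟨x, ⟨hux, hxu⟩, ⟨hvx, hxv⟩⟩
    have hlo_u : lo u ≤ hi v := f.le_iff_le.mp (hux.trans hxv)
    have hlo_v : lo v ≤ hi u := f.le_iff_le.mp (hvx.trans hxu)
    exact ⟨max (lo u) (lo v),
      (hconv u).out (hlo u) (hhi u) ⟨le_max_left _ _, max_le (hlo_le u _ (hhi u)) hlo_v⟩,
      (hconv v).out (hlo v) (hhi v) ⟨le_max_right _ _, max_le hlo_u (hlo_le v _ (hhi v))⟩⟩

end IntervalFamily

theorem isMaximalClique_induce_iff {V κ : Type*} {G : SimpleGraph V} {s : Set V}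
    {B : κ → Set V} (hB : ∀ j, IsMaximalClique G (B j)) (hBs : ∀ j, B j ⊆ s)
    (hcover : ∀ C : Set s, (G.induce s).IsClique C → ∃ j, Subtype.val '' C ⊆ B j) (C : Set s) :
    IsMaximalClique (G.induce s) C ↔ ∃ j, Subtype.val '' C = B j := by
  have himage : ∀ j, Subtype.val '' (Subtype.val ⁻¹' B j : Set s) = B j := fun j => by
    rw [Subtype.image_preimage_coe, Set.inter_eq_right.mpr (hBs j)]
  constructor
  · rintro ⟨hC, hCmax⟩
    obtain ⟨j, hj⟩ := hcover C hC
    have hCj : C = Subtype.val ⁻¹' B j :=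
      hCmax _ (isClique_induce_iff.mpr ((himage j).symm ▸ (hB j).1)) (Set.image_subset_iff.mp hj)
    exact ⟨j, hCj ▸ himage j⟩
  · rintro ⟨j, hj⟩
    refine ⟨isClique_induce_iff.mpr (hj ▸ (hB j).1), fun t ht hCt => ?_⟩
    have htj := (hB j).2 _ (isClique_induce_iff.mp ht) (hj ▸ Set.image_mono hCt)
    exact Subtype.val_injective.image_injective (hj.trans htj)

/-- Let `T` be a clique forest of a chordal graph `G`, let `P = C_1,…,C_k` be a
path in `T` (given by `c : Fin k → ι`), and let `V_P = C_1 ∪ … ∪ C_k`.  Then `P` is a clique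
forest of `G[V_P]`: the bags `C_1,…,C_k` are exactly the maximal cliques of `G[V_P]`, every
edge of `G[V_P]` is covered by some `C_j`, and for every `v ∈ V_P` the bags containing `v`
form a contiguous subpath of `P`.  Consequently, `G[V_P]` is an interval graph. -/
theorem stmt_8 {V ι : Type*} (G : SimpleGraph V) (D : CliqueForest V ι G)
    (k : ℕ) (hk : 1 ≤ k) (c : Fin k → ι) (hinj : Function.Injective c)
    (hchain : ∀ j : Fin k, ∀ hj : (j : ℕ) + 1 < k, D.T.Adj (c j) (c ⟨(j : ℕ) + 1, hj⟩))
    (VP : Set V) (hVP : VP = {v : V | ∃ j : Fin k, v ∈ D.bag (c j)}) :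
    (∀ C : Set ↥VP, IsMaximalClique (G.induce VP) C ↔
      ∃ j : Fin k, Subtype.val '' C = D.bag (c j)) ∧
    (∀ u v : V, ∀ hu : u ∈ VP, ∀ hv : v ∈ VP, G.Adj u v →
      ∃ j : Fin k, u ∈ D.bag (c j) ∧ v ∈ D.bag (c j)) ∧
    (∀ v ∈ VP, ∀ a b m : Fin k, a ≤ m → m ≤ b →
      v ∈ D.bag (c a) → v ∈ D.bag (c b) → v ∈ D.bag (c m)) ∧
    IsIntervalGraph (G.induce VP) := by
  subst hVP
  set VP := {v | ∃ j : Fin k, v ∈ D.bag (c j)}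
  have hcover : ∀ u v : V, u ∈ VP → v ∈ VP → G.Adj u v →
      ∃ j : Fin k, u ∈ D.bag (c j) ∧ v ∈ D.bag (c j) := by
    rintro u v ⟨j₁, hu⟩ ⟨j₂, hv⟩ huv
    exact D.exists_mem_bag_chain_of_adj hinj hchain huv hu hv
  let A : VP → Set (Fin k) := fun v => c ⁻¹' {i | ↑v ∈ D.bag i}
  have hconv : ∀ v, (A v).OrdConnected := fun v =>
    ⟨fun _ ha _ hb _ hm => D.mem_bag_chain_of_le_of_le hinj hchain hm.1 hm.2 ha hb⟩
  have hne : ∀ v, (A v).Nonempty := fun v => v.2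
  have hadj : ∀ u v, u ≠ v → ((G.induce VP).Adj u v ↔ (A u ∩ A v).Nonempty) :=
    fun u v huv => ⟨hcover u v u.2 v.2,
      fun ⟨j, hu, hv⟩ => (D.bag_maxClique (c j)).1 hu hv (Subtype.coe_ne_coe.mpr huv)⟩
  have : Nonempty (Fin k) := ⟨⟨0, hk⟩⟩
  refine ⟨isMaximalClique_induce_iff (fun j => D.bag_maxClique (c j)) (fun j v hv => ⟨j, hv⟩)
      (fun C hC => ?_), hcover, fun v _ a b m => D.mem_bag_chain_of_le_of_le hinj hchain,
    isIntervalGraph_of_adj_iff ((Fin.valOrderEmb k).trans Nat.castOrderEmbedding) hconv hne hadj⟩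
  obtain ⟨j, hj⟩ := exists_forall_mem_of_pairwise_inter_nonempty hconv hne
    fun u hu v hv huv => (hadj u v huv).1 (hC hu hv huv)
  exact ⟨j, Set.image_subset_iff.mpr hj⟩
end

section
/- For every real k ≥ 4 and real β ≥ 2(k−3) with β > 0, the quantity (β(1 + 4/(k−3)) + 2) / (β(1 + 2/(k−3)) + 1) is at most 1 + 2.5/(k − 0.5). -/
/-! Replacing the constants `2` and `1` in the numerator and denominator by `2s` and `s`, with
`s = β / (2(k-3)) ≥ 1`, can only increase the ratio, because the numerator is at most twice the
denominator. After this substitution `β` cancels and the ratio equals `1 + 2.5/(k - 0.5)` exactly. -/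

lemma add_div_add_one_le_add_mul_div_add_mul {A B c s : ℝ} (hB : 0 ≤ B) (hAB : A ≤ c * B)
    (hs : 1 ≤ s) : (A + c) / (B + 1) ≤ (A + c * s) / (B + s) := by
  rw [div_le_div_iff₀ (by linarith) (by linarith)]
  nlinarith [mul_le_mul_of_nonneg_right hAB (sub_nonneg.mpr hs)]

lemma ratio_eq_of_scaled_constants {k β : ℝ} (hk : 3 < k) (hβ : 0 < β) :
    (β * (1 + 4 / (k - 3)) + 2 * (β / (2 * (k - 3)))) /
        (β * (1 + 2 / (k - 3)) + β / (2 * (k - 3))) = 1 + 2.5 / (k - 0.5) := by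
  have hk3 : k - 3 ≠ 0 := by linarith
  have hk5 : k - 0.5 ≠ 0 := by linarith
  rw [div_eq_iff (by positivity)]
  field_simp
  ring

/-- For every real `k ≥ 4` and real `β ≥ 2(k−3)` with `β > 0`,
`(β(1 + 4/(k−3)) + 2) / (β(1 + 2/(k−3)) + 1) ≤ 1 + 2.5/(k − 0.5)`. -/
theorem stmt_12 (k β : ℝ) (hk : 4 ≤ k) (hβ2 : 2 * (k - 3) ≤ β) (hβ : 0 < β) :
    (β * (1 + 4 / (k - 3)) + 2) / (β * (1 + 2 / (k - 3)) + 1) ≤ 1 + 2.5 / (k - 0.5) := by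
  have hk3 : 0 < k - 3 := by linarith
  have hs : 1 ≤ β / (2 * (k - 3)) := by rw [le_div_iff₀ (by positivity)]; linarith
  have hAB : β * (1 + 4 / (k - 3)) ≤ 2 * (β * (1 + 2 / (k - 3))) := by
    linarith [show 2 * (β * (1 + 2 / (k - 3))) = β * (1 + 4 / (k - 3)) + β by ring]
  calc (β * (1 + 4 / (k - 3)) + 2) / (β * (1 + 2 / (k - 3)) + 1)
      ≤ (β * (1 + 4 / (k - 3)) + 2 * (β / (2 * (k - 3)))) /
          (β * (1 + 2 / (k - 3)) + β / (2 * (k - 3))) :=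
        add_div_add_one_le_add_mul_div_add_mul (by positivity) hAB hs
    _ = 1 + 2.5 / (k - 0.5) := ratio_eq_of_scaled_constants (by linarith) hβ
end

section
/- Let p ∈ [0, 1/2 + c/n] for a constant c, r ≥ 0 an integer, and suppose p(2r+3) ≤ r + 5/4 + c'/n for a constant c'. If (1+ε)·((2r+2) + (n − 2r − 2)·p) ≥ ⌈n/2⌉ for all sufficiently large n, then r ≥ Ω(1/ε); concretely, p ≤ (r + 5/4 + c'/n)/(2r+3) implies (1+ε)(1/2 − 1/(8r+12)) ≥ 1/2 − o(1), hence 1/(8r+12) ≤ ε/(2(1+ε)) + o(1). -/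
/-!
Since `(r + 5/4)/(2r+3) = 1/2 - 1/(8r+12)`, the window bound says that `p` falls short of `1/2`
by `1/(8r+12)` up to `O(1/n)`. Feeding this into the approximation guarantee and dividing by `n`
gives `1/(2(1+ε)) ≤ 1/2 - 1/(8r+12) + O(1/n)`, and `1/2 - 1/(2(1+ε)) = ε/(2(1+ε))`.
When `n < 2r+2` there is nothing to prove: the error term `(2r+2)/n` alone exceeds `1`.
-/

section

variable {n ε c' p r : ℝ}

lemma le_half_sub_of_window_bound (hr : 0 ≤ r) (hwin : p * (2 * r + 3) ≤ r + 5 / 4 + c' / n) :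
    p ≤ 1 / 2 - 1 / (8 * r + 12) + c' / (2 * r + 3) / n := by
  have hD : 0 < 2 * r + 3 := by linarith
  have hsplit : (r + 5 / 4 + c' / n) / (2 * r + 3)
      = 1 / 2 - 1 / (8 * r + 12) + c' / (2 * r + 3) / n := by
    field_simp
    ring
  rw [← hsplit]
  exact (le_div_iff₀ hD).2 hwin

lemma mul_le_mul_add_of_le_add_div {m q a : ℝ} (hn : 0 < n) (hm : 0 ≤ m) (hmn : m ≤ n)
    (hq : 0 ≤ q) (ha : 0 ≤ a) (hp : p ≤ q + a / n) : m * p ≤ n * q + a := by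
  have hmn' : m / n ≤ 1 := (div_le_one hn).2 hmn
  calc m * p ≤ m * (q + a / n) := mul_le_mul_of_nonneg_left hp hm
    _ = m * q + m / n * a := by ring
    _ ≤ n * q + 1 * a := by gcongr
    _ = n * q + a := by ring

lemma half_sub_one_div_two_mul_one_add (hε : 1 + ε ≠ 0) :
    1 / 2 - 1 / (2 * (1 + ε)) = ε / (2 * (1 + ε)) := by
  field_simp
  ring

lemma one_div_le_of_two_mul_add_two_le (hn : 0 < n) (hε : 0 < 1 + ε) (hc' : 0 ≤ c') (hr : 0 ≤ r)
    (hlarge : 2 * r + 2 ≤ n) (hwin : p * (2 * r + 3) ≤ r + 5 / 4 + c' / n)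
    (happrox : n / 2 ≤ (1 + ε) * ((2 * r + 2) + (n - 2 * r - 2) * p)) :
    1 / (8 * r + 12) ≤ ε / (2 * (1 + ε)) + ((2 * r + 2) + c' / (2 * r + 3)) / n := by
  have hgap : 0 ≤ 1 / 2 - 1 / (8 * r + 12) := by
    rw [sub_nonneg, div_le_div_iff₀ (by linarith) two_pos]
    linarith
  have hcount : (n - 2 * r - 2) * p ≤ n * (1 / 2 - 1 / (8 * r + 12)) + c' / (2 * r + 3) :=
    mul_le_mul_add_of_le_add_div hn (by linarith) (by linarith) hgap (by positivity)
      (le_half_sub_of_window_bound hr hwin)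
  have hsize : n / (2 * (1 + ε))
      ≤ n * (1 / 2 - 1 / (8 * r + 12)) + ((2 * r + 2) + c' / (2 * r + 3)) := by
    calc n / (2 * (1 + ε)) = n / 2 / (1 + ε) := by rw [div_div]
      _ ≤ (2 * r + 2) + (n - 2 * r - 2) * p := (div_le_iff₀' hε).2 happrox
      _ ≤ _ := by linarith
  have hscaled : 1 / (2 * (1 + ε))
      ≤ 1 / 2 - 1 / (8 * r + 12) + ((2 * r + 2) + c' / (2 * r + 3)) / n := by
    have hdiv : 1 / 2 - 1 / (8 * r + 12) + ((2 * r + 2) + c' / (2 * r + 3)) / n - 1 / (2 * (1 + ε))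
        = (n * (1 / 2 - 1 / (8 * r + 12)) + ((2 * r + 2) + c' / (2 * r + 3))
            - n / (2 * (1 + ε))) / n := by
      field_simp
    rw [← sub_nonneg, hdiv]
    exact div_nonneg (by linarith) hn.le
  have := half_sub_one_div_two_mul_one_add hε.ne'
  linarith

lemma one_div_le_of_lt_two_mul_add_two (hn : 0 < n) (hε : 0 ≤ ε) (hc' : 0 ≤ c') (hr : 0 ≤ r)
    (hsmall : n < 2 * r + 2) :
    1 / (8 * r + 12) ≤ ε / (2 * (1 + ε)) + ((2 * r + 2) + c' / (2 * r + 3)) / n := by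
  calc 1 / (8 * r + 12) ≤ 1 := (div_le_one (by linarith)).2 (by linarith)
    _ ≤ (2 * r + 2) / n := (one_le_div hn).2 hsmall.le
    _ ≤ (2 * r + 2 + c' / (2 * r + 3)) / n :=
      div_le_div_of_nonneg_right (le_add_of_nonneg_right (by positivity)) hn.le
    _ ≤ ε / (2 * (1 + ε)) + ((2 * r + 2) + c' / (2 * r + 3)) / n :=
      le_add_of_nonneg_left (by positivity)

end

theorem stmt_17_general (n ε c' p : ℝ) (r : ℕ)
    (hn : 0 < n) (hε : 0 < ε) (hc' : 0 ≤ c')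
    (hwin : p * (2 * r + 3) ≤ r + 5 / 4 + c' / n)
    (happrox : n / 2 ≤ (1 + ε) * ((2 * r + 2) + (n - 2 * r - 2) * p)) :
    1 / (8 * r + 12) ≤ ε / (2 * (1 + ε)) + ((2 * r + 2) + c' / (2 * r + 3)) / n := by
  rcases le_or_gt (2 * (r : ℝ) + 2) n with hlarge | hsmall
  · exact one_div_le_of_two_mul_add_two_le hn (by linarith) hc' r.cast_nonneg hlarge hwin happrox
  · exact one_div_le_of_lt_two_mul_add_two hn hε.le hc' r.cast_nonneg hsmall

/-- arithmetic skeleton of the Ω(1/ε) lower bound for MIS on paths: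
if `p ∈ [0, 1/2 + c/n]`, `p(2r+3) ≤ r + 5/4 + c'/n` and the approximation guarantee
`⌈n/2⌉ ≤ (1+ε)((2r+2) + (n−2r−2)p)` holds, then
`1/(8r+12) ≤ ε/(2(1+ε)) + o(1)`, the `o(1)` term being `((2r+2) + c'/(2r+3))/n`. -/
theorem stmt_17 (n ε c c' p : ℝ) (r : ℕ)
    (hn : 0 < n) (hε : 0 < ε) (hc : 0 ≤ c) (hc' : 0 ≤ c')
    (hp0 : 0 ≤ p) (hp1 : p ≤ 1 / 2 + c / n)
    (hwin : p * (2 * r + 3) ≤ r + 5 / 4 + c' / n)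
    (happrox : n / 2 ≤ (1 + ε) * ((2 * r + 2) + (n - 2 * r - 2) * p)) :
    1 / (8 * r + 12) ≤ ε / (2 * (1 + ε)) + ((2 * r + 2) + c' / (2 * r + 3)) / n :=
  stmt_17_general n ε c' p r hn hε hc' hwin happrox
end
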